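/- Let Σ_I = {a,b,c}, Σ_O = {b,c}, and let L_0 ⊆ (Σ_I × Σ_O)^ω consist of all (α, β) such that either α(n) = a for all n, or β(0) = α(n) where n is the least position with α(n) ≠ a. Then for every delay function f, Player I has a winning strategy in Γ_f(L_0); moreover, Player I has an omnipotent output-tracking strategy for L_0's complement condition: the strategy τ with τ(ε) = a^ω, τ(bx) = c^ω, τ(cx) = b^ω (for x ∈ Σ_O^*) is winning for Player I in Γ_f(L_0) for every f. -/
import Mathlib


open scoped Classical MeasureTheory

section DelayGames

variable {I O A B : Type}

/-- `shiftSeq f β = ▷^{f 0 - 1} β 0 ▷^{f 1 - 1} β 1 ⋯`, where the skip symbol `▷`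
is modeled by `none` and a letter `b ∈ Σ_O` by `some b`. -/
noncomputable def shiftSeq (f : ℕ → ℕ) (β : ℕ → O) : ℕ → Option O := fun n =>
  if h : ∃ i, (∑ j ∈ Finset.range (i + 1), f j) = n + 1 then some (β (Nat.find h))
  else none

/-- `shift_f(L) = { (α, shift_f(β)) : (α, β) ∈ L }`. -/
def shiftLang (f : ℕ → ℕ) (L : Set ((ℕ → I) × (ℕ → O))) :
    Set ((ℕ → I) × (ℕ → Option O)) :=
  {p | ∃ β : ℕ → O, (p.1, β) ∈ L ∧ p.2 = shiftSeq f β}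

/-- The morphism `h` erasing the skip symbol, applied to an infinite word
(meaningful when the word has infinitely many non-skip letters). -/
noncomputable def eraseSkips [Inhabited O] (β : ℕ → Option O) : ℕ → O := fun n =>
  (β (Nat.nth (fun k => (β k).isSome) n)).getD default

/-- `skip(L) = ⋃_f shift_f(L) = { (α,β) : β has infinitely many non-▷ letters and (α, h β) ∈ L }`. -/
def skipLang [Inhabited O] (L : Set ((ℕ → I) × (ℕ → O))) :
    Set ((ℕ → I) × (ℕ → Option O)) :=
  {p | {k | (p.2 k).isSome}.Infinite ∧ (p.1, eraseSkips p.2) ∈ L}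

/-- A play of a Gale-Stewart game is consistent with the Player O strategy `σ`. -/
def gsConsO (σ : List A → B) (α : ℕ → A) (β : ℕ → B) : Prop :=
  ∀ i, β i = σ (List.ofFn fun j : Fin (i + 1) => α j)

/-- A play of a Gale-Stewart game is consistent with the Player I strategy `τ`. -/
def gsConsI (τ : List B → A) (α : ℕ → A) (β : ℕ → B) : Prop :=
  ∀ i, α i = τ (List.ofFn fun j : Fin i => β j)

/-- `σ` is a winning strategy for Player O in the Gale-Stewart game with winning condition `W`. -/
def gsWinO (W : Set ((ℕ → A) × (ℕ → B))) (σ : List A → B) : Prop :=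
  ∀ α β, gsConsO σ α β → (α, β) ∈ W

/-- `τ` is a winning strategy for Player I in the Gale-Stewart game with winning condition `W`. -/
def gsWinI (W : Set ((ℕ → A) × (ℕ → B))) (τ : List B → A) : Prop :=
  ∀ α β, gsConsI τ α β → (α, β) ∉ W

/-- The infinite word `u 0 · u 1 · u 2 ⋯` built by Player I in a delay game
(well-defined at position `n` as soon as the first `n+1` blocks have more than `n` letters). -/
def outcomeI [Inhabited I] (u : ℕ → List I) : ℕ → I := fun n =>
  ((List.ofFn fun j : Fin (n + 1) => u j).flatten).getD n default

/-- The word `v 0 ⋯ v (i-1)` of the first `i` letters of `v`. -/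
def prefixW (v : ℕ → O) (i : ℕ) : List O := List.ofFn fun j : Fin i => v j

/-- The concatenation `u 0 · u 1 ⋯ u i` of Player I's moves up to round `i`. -/
def inputsUpTo (u : ℕ → List I) (i : ℕ) : List I :=
  (List.ofFn fun j : Fin (i + 1) => u j).flatten

/-- `τ : Σ_O^* → Σ_I^*` is a (syntactically valid) Player I strategy for the
delay game `Γ_f(L)`: it answers with `f i` letters in round `i`. -/
def delayStratI (f : ℕ → ℕ) (τ : List O → List I) : Prop :=
  ∀ w : List O, (τ w).length = f w.length

/-- `τ` is winning for Player I in the delay game `Γ_f(L)`. -/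
def delayWinI [Inhabited I] (f : ℕ → ℕ) (L : Set ((ℕ → I) × (ℕ → O)))
    (τ : List O → List I) : Prop :=
  ∀ (u : ℕ → List I) (v : ℕ → O), (∀ i, (u i).length = f i) →
    (∀ i, u i = τ (prefixW v i)) → (outcomeI u, v) ∉ L

/-- `σ : Σ_I^* → Σ_O` is winning for Player O in the delay game `Γ_f(L)`. -/
def delayWinO [Inhabited I] (f : ℕ → ℕ) (L : Set ((ℕ → I) × (ℕ → O)))
    (σ : List I → O) : Prop :=
  ∀ (u : ℕ → List I) (v : ℕ → O), (∀ i, (u i).length = f i) →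
    (∀ i, v i = σ (inputsUpTo u i)) → (outcomeI u, v) ∈ L

/-- A round-counting strategy `σ : Σ_I^* × ℕ → Σ_O` is winning for Player O in `Γ_f(L)`:
in round `i` Player O plays `σ (u 0 ⋯ u i) i`. -/
def rcWinO [Inhabited I] (f : ℕ → ℕ) (L : Set ((ℕ → I) × (ℕ → O)))
    (σ : List I → ℕ → O) : Prop :=
  ∀ (u : ℕ → List I) (v : ℕ → O), (∀ i, (u i).length = f i) →
    (∀ i, v i = σ (inputsUpTo u i) i) → (outcomeI u, v) ∈ L

/-- An output-tracking strategy `τ : Σ_O^* → Σ_I^ω` is winning for Player I in `Γ_f(L)`: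
in round `i` Player I plays the length-`f i` prefix of `τ (v 0 ⋯ v (i-1))`. -/
def otWinI [Inhabited I] (f : ℕ → ℕ) (L : Set ((ℕ → I) × (ℕ → O)))
    (τ : List O → ℕ → I) : Prop :=
  ∀ (u : ℕ → List I) (v : ℕ → O),
    (∀ i, u i = List.ofFn fun j : Fin (f i) => τ (prefixW v i) j) →
    (outcomeI u, v) ∉ L

/-- A lookahead-counting strategy `τ : Σ_O^* × ℕ → Σ_I^ω` is winning for Player I in `Γ_f(L)`:
in round `i` Player I plays the length-`f i` prefix of `τ (v 0 ⋯ v (i-1), Σ_{j<i} f j)`. -/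
def lcWinI [Inhabited I] (f : ℕ → ℕ) (L : Set ((ℕ → I) × (ℕ → O)))
    (τ : List O → ℕ → ℕ → I) : Prop :=
  ∀ (u : ℕ → List I) (v : ℕ → O),
    (∀ i, u i = List.ofFn fun j : Fin (f i) =>
      τ (prefixW v i) (∑ k ∈ Finset.range i, f k) j) →
    (outcomeI u, v) ∉ L

/-- A history-tracking strategy `τ : Σ_O^* × (ℕ_{>0})^* → Σ_I^ω` is winning for Player I
in `Γ_f(L)`: in round `i` Player I plays the length-`f i` prefix of
`τ (v 0 ⋯ v (i-1), f 0 ⋯ f (i-1))`. -/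
def htWinI [Inhabited I] (f : ℕ → ℕ) (L : Set ((ℕ → I) × (ℕ → O)))
    (τ : List O → List ℕ → ℕ → I) : Prop :=
  ∀ (u : ℕ → List I) (v : ℕ → O),
    (∀ i, u i = List.ofFn fun j : Fin (f i) => τ (prefixW v i) (prefixW f i) j) →
    (outcomeI u, v) ∉ L

/-- `f ⊑ f'` : in every round, the lookahead granted by `f'` is at least that granted by `f`. -/
def delayLE (f f' : ℕ → ℕ) : Prop :=
  ∀ i, (∑ j ∈ Finset.range (i + 1), f j) ≤ ∑ j ∈ Finset.range (i + 1), f' j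

end DelayGames
/-- The alphabet `Σ_I = {a, b, c}`. -/
inductive Tri : Type | a | b | c
deriving DecidableEq

instance : Inhabited Tri := ⟨Tri.a⟩

instance : Fintype Tri :=
  ⟨⟨{Tri.a, Tri.b, Tri.c}, by decide⟩, fun x => by cases x <;> decide⟩

/-- The alphabet `Σ_O = {b, c}`, as the subtype of non-`a` letters. -/
abbrev TriO : Type := {x : Tri // x ≠ Tri.a}

instance : Inhabited TriO := ⟨⟨Tri.b, by decide⟩⟩

/-- `L_0`: Player O wins iff Player I only plays `a`'s, or Player O's first letter
equals Player I's first non-`a` letter. -/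
def L0 : Set ((ℕ → Tri) × (ℕ → TriO)) :=
  {p | (∀ n, p.1 n = Tri.a) ∨
    ∃ n, p.1 n ≠ Tri.a ∧ (∀ m, m < n → p.1 m = Tri.a) ∧ (p.2 0 : Tri) = p.1 n}

/-- Player I's strategy: `τ(ε) = a^ω`, `τ(bx) = c^ω`, `τ(cx) = b^ω`. -/
def tau0 : List TriO → ℕ → Tri
  | [], _ => Tri.a
  | x :: _, _ => if x.1 = Tri.b then Tri.c else Tri.b

lemma ofFn_congr19 {α : Type} (g : ℕ → α) {m m' : ℕ} (h : m = m') :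
    (List.ofFn fun j : Fin m => g j) = List.ofFn fun j : Fin m' => g j := by subst h; rfl

lemma key19 (f : ℕ → ℕ) (hf : ∀ i, 0 < f i) : otWinI f L0 tau0 := by
  intro u v hu hmem
  set x : Tri := if (v 0 : Tri) = Tri.b then Tri.c else Tri.b with hx
  have hx_ne_a : x ≠ Tri.a := by
    rw [hx]; split <;> decide
  have hlenu : ∀ i, (u i).length = f i := by
    intro i; rw [hu i, List.length_ofFn]
  have hu0 : u 0 = List.replicate (f 0) Tri.a := by
    rw [hu 0]
    have hp : prefixW v 0 = [] := by simp [prefixW]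
    rw [hp]
    simp [tau0, List.ofFn_const]
  have hui : ∀ i, 0 < i → u i = List.replicate (f i) x := by
    intro i hi
    obtain ⟨k, rfl⟩ := Nat.exists_eq_succ_of_ne_zero hi.ne'
    rw [hu (k + 1)]
    have hp : prefixW v (k + 1) = v 0 :: (List.ofFn fun j : Fin k => v (j + 1)) := by
      simp [prefixW, List.ofFn_succ]
    rw [hp]
    have : ∀ j : ℕ, tau0 (v 0 :: (List.ofFn fun j : Fin k => v (j + 1))) j = x := by
      intro j; simp [tau0, hx]
    simp only [this, List.ofFn_const]
  -- the flattened word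
  have hlenL : ∀ n : ℕ, n < ((List.ofFn fun j : Fin (n + 1) => u j).flatten).length := by
    intro n
    rw [List.length_flatten]
    have h1 : ((List.ofFn fun j : Fin (n + 1) => u j).map List.length).sum
        = ∑ j : Fin (n + 1), (u j).length := by
      rw [List.map_ofFn, List.sum_ofFn]; rfl
    rw [h1]
    calc n < n + 1 := Nat.lt_succ_self n
    _ = ∑ _j : Fin (n + 1), 1 := by simp
    _ ≤ ∑ j : Fin (n + 1), (u j).length := by
        apply Finset.sum_le_sum; intro j _; rw [hlenu]; exact hf j
  have hsplit : ∀ n : ℕ, (List.ofFn fun j : Fin (n + 1) => u j).flatten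
      = u 0 ++ (List.ofFn fun j : Fin n => u (j + 1)).flatten := by
    intro n; rw [List.ofFn_succ]; rfl
  have hαlt : ∀ n, n < f 0 → outcomeI u n = Tri.a := by
    intro n hn
    have hL : n < (u 0 ++ (List.ofFn fun j : Fin n => u (j + 1)).flatten).length := by
      rw [← hsplit n]; exact hlenL n
    rw [outcomeI, hsplit n, List.getD_eq_getElem _ _ hL]
    have hn' : n < (u 0).length := by rw [hlenu]; exact hn
    rw [List.getElem_append_left hn']
    have hm : (u 0)[n] ∈ List.replicate (f 0) Tri.a := by
      rw [← hu0]; exact List.getElem_mem _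
    exact List.eq_of_mem_replicate hm
  have hαge : ∀ n, f 0 ≤ n → outcomeI u n = x := by
    intro n hn
    have hL : n < (u 0 ++ (List.ofFn fun j : Fin n => u (j + 1)).flatten).length := by
      rw [← hsplit n]; exact hlenL n
    rw [outcomeI, hsplit n, List.getD_eq_getElem _ _ hL]
    have hn' : ¬ n < (u 0).length := by rw [hlenu]; omega
    rw [List.getElem_append_right (Nat.le_of_not_lt hn')]
    have hmem2 : ((List.ofFn fun j : Fin n => u (j + 1)).flatten)[n - (u 0).length]'(by
        rw [List.length_append] at hL; omega) ∈ (List.ofFn fun j : Fin n => u (j + 1)).flatten :=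
      List.getElem_mem _
    rw [List.mem_flatten] at hmem2
    obtain ⟨l, hl, he⟩ := hmem2
    rw [List.mem_ofFn] at hl
    obtain ⟨j, rfl⟩ := hl
    rw [hui (j + 1) (Nat.succ_pos _)] at he
    exact (List.eq_of_mem_replicate he)
  -- now derive the contradiction
  rcases hmem with h | ⟨n, hne, hbelow, heq⟩

  · exact hx_ne_a (by rw [← hαge (f 0) le_rfl]; exact h (f 0))
  · dsimp only at hne hbelow heq
    have hnf : n = f 0 := by
      by_contra hne'
      rcases Nat.lt_or_ge n (f 0) with h' | h'
      · exact hne (hαlt n h')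
      · have : f 0 < n := lt_of_le_of_ne h' (Ne.symm hne')
        exact hx_ne_a (by rw [← hαge (f 0) le_rfl]; exact hbelow (f 0) this)
    rw [hnf, hαge (f 0) le_rfl, hx] at heq
    rcases hv : ((v 0 : Tri)) with _ | _ | _
    · exact (v 0).2 hv
    · rw [hv] at heq; revert heq; decide
    · rw [hv] at heq; revert heq; decide

/-- Player I wins `Γ_f(L_0)` for every delay function `f`; moreover, the
output-tracking strategy `tau0` is omnipotent, i.e. winning for Player I in every `Γ_f(L_0)`. -/
theorem stmt19 :
    (∀ f : ℕ → ℕ, (∀ i, 0 < f i) →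
      ∃ τ : List TriO → List Tri, delayStratI f τ ∧ delayWinI f L0 τ) ∧
    (∀ f : ℕ → ℕ, (∀ i, 0 < f i) → otWinI f L0 tau0) := by
  constructor
  · intro f hf
    refine ⟨fun w => List.ofFn fun j : Fin (f w.length) => tau0 w j, ?_, ?_⟩
    · intro w; rw [List.length_ofFn]
    · intro u v hlen hcons
      apply key19 f hf u v
      intro i
      have hpl : (prefixW v i).length = i := by simp [prefixW]
      rw [hcons i]
      exact ofFn_congr19 (tau0 (prefixW v i)) (by rw [hpl])
  · exact key19
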